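/- Let A ∈ ℝ^{n×n}, B ∈ ℝ^{n×m}, C₁ ∈ ℝ^{p×n}, D₁ ∈ ℝ^{p×m}, C₂ ∈ ℝ^{q×n}, D₂ ∈ ℝ^{q×m}, and suppose there exists a symmetric matrix P ∈ ℝ^{n×n} such that the block matrix [[AᵀPA − P, AᵀPB],[BᵀPA, BᵀPB]] + [[C₂ᵀC₂ − C₁ᵀC₁, C₂ᵀD₂ − C₁ᵀD₁],[D₂ᵀC₂ − D₁ᵀC₁, D₂ᵀD₂ − D₁ᵀD₁]] is negative semidefinite. Then for every N ∈ ℕ and every trajectory x[k+1] = A x[k] + B a[k], y₁[k] = C₁ x[k] + D₁ a[k], y₂[k] = C₂ x[k] + D₂ a[k] with x[0] = 0 and x[N+1] = 0, it holds that Σ_{k=0}^{N} ‖y₂[k]‖² ≤ Σ_{k=0}^{N} ‖y₁[k]‖². -/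

import Mathlib

/-!
With the storage function `V k = x[k] ⬝ P x[k]`, the quadratic form of the LMI matrix at
`(x[k], a[k])` is exactly `V (k+1) - V k + ‖y₂[k]‖² - ‖y₁[k]‖²`. Negative semidefiniteness
therefore bounds each storage increment by the supply `‖y₁[k]‖² - ‖y₂[k]‖²`; summing, the
increments telescope to `V (N+1) - V 0 = 0`.
-/

open Matrix Finset

section Telescoping

variable {α : Type*} [AddCommGroup α] [PartialOrder α] [IsOrderedAddMonoid α]

theorem sub_le_sum_range_of_sub_le {V s : ℕ → α} (h : ∀ k, V (k + 1) - V k ≤ s k) (n : ℕ) :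
    V n - V 0 ≤ ∑ k ∈ range n, s k := by
  rw [← sum_range_sub]
  exact sum_le_sum fun k _ => h k

end Telescoping

section QuadraticForms

variable {ι κ σ τ : Type*} [Fintype ι] [Fintype κ] [Fintype σ]

theorem dotProduct_self_eq_sum_sq {R : Type*} [Semiring R] (v : ι → R) :
    v ⬝ᵥ v = ∑ i, v i ^ 2 := by
  simp only [dotProduct, sq]

theorem dotProduct_transpose_mul_mulVec (M : Matrix ι κ ℝ) (Q : Matrix ι σ ℝ)
    (u : κ → ℝ) (z : σ → ℝ) : u ⬝ᵥ (Mᵀ * Q) *ᵥ z = M *ᵥ u ⬝ᵥ Q *ᵥ z := by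
  rw [← mulVec_mulVec, dotProduct_mulVec, vecMul_transpose]

theorem dotProduct_transpose_mul_mul_mulVec (M : Matrix ι κ ℝ) (P : Matrix ι ι ℝ)
    (Q : Matrix ι σ ℝ) (u : κ → ℝ) (z : σ → ℝ) :
    u ⬝ᵥ (Mᵀ * P * Q) *ᵥ z = M *ᵥ u ⬝ᵥ P *ᵥ (Q *ᵥ z) := by
  rw [Matrix.mul_assoc, dotProduct_transpose_mul_mulVec, mulVec_mulVec]

variable [Fintype τ]

/-- The matrix of the dissipation inequality with storage `x ⬝ P x` and supply rate
`‖C₁ x + D₁ a‖² - ‖C₂ x + D₂ a‖²`. -/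
def dissipationMatrix (A : Matrix ι ι ℝ) (B : Matrix ι κ ℝ) (C₁ : Matrix σ ι ℝ)
    (D₁ : Matrix σ κ ℝ) (C₂ : Matrix τ ι ℝ) (D₂ : Matrix τ κ ℝ) (P : Matrix ι ι ℝ) :
    Matrix (ι ⊕ κ) (ι ⊕ κ) ℝ :=
  fromBlocks
    (A.transpose * P * A - P + (C₂.transpose * C₂ - C₁.transpose * C₁))
    (A.transpose * P * B + (C₂.transpose * D₂ - C₁.transpose * D₁))
    (B.transpose * P * A + (D₂.transpose * C₂ - D₁.transpose * C₁))
    (B.transpose * P * B + (D₂.transpose * D₂ - D₁.transpose * D₁))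

theorem sumElim_dotProduct_dissipationMatrix_mulVec (A : Matrix ι ι ℝ) (B : Matrix ι κ ℝ)
    (C₁ : Matrix σ ι ℝ) (D₁ : Matrix σ κ ℝ) (C₂ : Matrix τ ι ℝ) (D₂ : Matrix τ κ ℝ)
    (P : Matrix ι ι ℝ) (x : ι → ℝ) (a : κ → ℝ) :
    Sum.elim x a ⬝ᵥ dissipationMatrix A B C₁ D₁ C₂ D₂ P *ᵥ Sum.elim x a =
      (A *ᵥ x + B *ᵥ a) ⬝ᵥ P *ᵥ (A *ᵥ x + B *ᵥ a) - x ⬝ᵥ P *ᵥ x +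
        ((C₂ *ᵥ x + D₂ *ᵥ a) ⬝ᵥ (C₂ *ᵥ x + D₂ *ᵥ a) -
          (C₁ *ᵥ x + D₁ *ᵥ a) ⬝ᵥ (C₁ *ᵥ x + D₁ *ᵥ a)) := by
  rw [dissipationMatrix, fromBlocks_mulVec, sumElim_dotProduct_sumElim]
  simp only [add_mulVec, sub_mulVec, dotProduct_add, dotProduct_sub, add_dotProduct,
    mulVec_add, Sum.elim_comp_inl, Sum.elim_comp_inr, dotProduct_transpose_mul_mul_mulVec,
    dotProduct_transpose_mul_mulVec]
  ring

end QuadraticForms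

theorem stmt13_general {n m p q : ℕ}
    (A : Matrix (Fin n) (Fin n) ℝ) (B : Matrix (Fin n) (Fin m) ℝ)
    (C₁ : Matrix (Fin p) (Fin n) ℝ) (D₁ : Matrix (Fin p) (Fin m) ℝ)
    (C₂ : Matrix (Fin q) (Fin n) ℝ) (D₂ : Matrix (Fin q) (Fin m) ℝ)
    (P : Matrix (Fin n) (Fin n) ℝ)
    (hLMI : (-(Matrix.fromBlocks
        (A.transpose * P * A - P + (C₂.transpose * C₂ - C₁.transpose * C₁))
        (A.transpose * P * B + (C₂.transpose * D₂ - C₁.transpose * D₁))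
        (B.transpose * P * A + (D₂.transpose * C₂ - D₁.transpose * C₁))
        (B.transpose * P * B + (D₂.transpose * D₂ - D₁.transpose * D₁)))).PosSemidef) :
    ∀ (N : ℕ) (x : ℕ → Fin n → ℝ) (a : ℕ → Fin m → ℝ)
      (y₁ : ℕ → Fin p → ℝ) (y₂ : ℕ → Fin q → ℝ),
      (∀ k, x (k + 1) = A.mulVec (x k) + B.mulVec (a k)) →
      (∀ k, y₁ k = C₁.mulVec (x k) + D₁.mulVec (a k)) →
      (∀ k, y₂ k = C₂.mulVec (x k) + D₂.mulVec (a k)) →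
      x 0 = 0 → x (N + 1) = 0 →
      ∑ k ∈ Finset.range (N + 1), ∑ j, (y₂ k j) ^ 2 ≤
        ∑ k ∈ Finset.range (N + 1), ∑ j, (y₁ k j) ^ 2 := by
  intro N x a y₁ y₂ hx hy₁ hy₂ hx0 hxN
  have hstep : ∀ k, x (k + 1) ⬝ᵥ P *ᵥ x (k + 1) - x k ⬝ᵥ P *ᵥ x k ≤
      ∑ j, (y₁ k j) ^ 2 - ∑ j, (y₂ k j) ^ 2 := by
    intro k
    have hneg := hLMI.dotProduct_mulVec_nonneg (Sum.elim (x k) (a k))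
    rw [star_trivial, neg_mulVec, dotProduct_neg, neg_nonneg,
      ← dissipationMatrix, sumElim_dotProduct_dissipationMatrix_mulVec,
      ← hx, ← hy₁, ← hy₂, dotProduct_self_eq_sum_sq, dotProduct_self_eq_sum_sq] at hneg
    linarith
  have htotal :=
    sub_le_sum_range_of_sub_le (V := fun k => x k ⬝ᵥ P *ᵥ x k) hstep (N + 1)
  rw [hx0, hxN, sum_sub_distrib] at htotal
  simpa using htotal

theorem stmt13 {n m p q : ℕ}
    (A : Matrix (Fin n) (Fin n) ℝ) (B : Matrix (Fin n) (Fin m) ℝ)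
    (C₁ : Matrix (Fin p) (Fin n) ℝ) (D₁ : Matrix (Fin p) (Fin m) ℝ)
    (C₂ : Matrix (Fin q) (Fin n) ℝ) (D₂ : Matrix (Fin q) (Fin m) ℝ)
    (P : Matrix (Fin n) (Fin n) ℝ) (hP : P.IsSymm)
    (hLMI : (-(Matrix.fromBlocks
        (A.transpose * P * A - P + (C₂.transpose * C₂ - C₁.transpose * C₁))
        (A.transpose * P * B + (C₂.transpose * D₂ - C₁.transpose * D₁))
        (B.transpose * P * A + (D₂.transpose * C₂ - D₁.transpose * C₁))
        (B.transpose * P * B + (D₂.transpose * D₂ - D₁.transpose * D₁)))).PosSemidef) :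
    ∀ (N : ℕ) (x : ℕ → Fin n → ℝ) (a : ℕ → Fin m → ℝ)
      (y₁ : ℕ → Fin p → ℝ) (y₂ : ℕ → Fin q → ℝ),
      (∀ k, x (k + 1) = A.mulVec (x k) + B.mulVec (a k)) →
      (∀ k, y₁ k = C₁.mulVec (x k) + D₁.mulVec (a k)) →
      (∀ k, y₂ k = C₂.mulVec (x k) + D₂.mulVec (a k)) →
      x 0 = 0 → x (N + 1) = 0 →
      ∑ k ∈ Finset.range (N + 1), ∑ j, (y₂ k j) ^ 2 ≤
        ∑ k ∈ Finset.range (N + 1), ∑ j, (y₁ k j) ^ 2 :=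
  stmt13_general A B C₁ D₁ C₂ D₂ P hLMI
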